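/- For every integer p ≥ 1, ∫_{−1}^{1} L̂_p(x)² dx = (2/(2p+3) + 2/(2p−1)) / (2p+1)²; consequently p(p−1)² ∫_{−1}^{1} L̂_p(x)² dx ≤ 1/2. -/

import Mathlib

open MeasureTheory

noncomputable section

/-- The `k`-th Legendre polynomial via Rodrigues' formula
`L_k(x) = (1/(2^k k!)) dᵏ/dxᵏ (x² − 1)ᵏ`. -/
def legendre (k : ℕ) : Polynomial ℝ :=
  Polynomial.C (1 / (2 ^ k * (Nat.factorial k : ℝ))) *
    (Polynomial.derivative (R := ℝ))^[k] ((Polynomial.X ^ 2 - 1) ^ k)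

/-- `L̂_k(x) = ∫_{−1}^x L_k(t) dt`, the antiderivative of the `k`-th Legendre polynomial. -/
def Lhat (k : ℕ) (x : ℝ) : ℝ := ∫ t in (-1 : ℝ)..x, (legendre k).eval t

namespace LhatAux

open Polynomial

/-- the base polynomial -/
def f (p : ℕ) : Polynomial ℝ := (X ^ 2 - 1) ^ p

lemma intable (P : Polynomial ℝ) (a b : ℝ) :
    IntervalIntegrable (fun x => P.eval x) volume a b :=
  P.continuous.intervalIntegrable a b

lemma intable2 (P Q : Polynomial ℝ) (a b : ℝ) :
    IntervalIntegrable (fun x => P.eval x * Q.eval x) volume a b :=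
  (P.continuous.mul Q.continuous).intervalIntegrable a b

lemma integral_derivative (P : Polynomial ℝ) (a b : ℝ) :
    ∫ x in a..b, (derivative P).eval x = P.eval b - P.eval a := by
  apply intervalIntegral.integral_eq_sub_of_hasDerivAt
  · intro x _
    simpa using P.hasDerivAt x
  · exact intable _ a b

lemma ibp (u v : Polynomial ℝ) :
    (∫ x in (-1:ℝ)..1, (derivative u).eval x * v.eval x)
    = u.eval 1 * v.eval 1 - u.eval (-1) * v.eval (-1)
      - ∫ x in (-1:ℝ)..1, u.eval x * (derivative v).eval x := by
  have h := integral_derivative (u * v) (-1) 1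
  rw [derivative_mul] at h
  simp only [eval_mul, eval_add] at h
  rw [intervalIntegral.integral_add (intable2 _ _ _ _) (intable2 _ _ _ _)] at h
  linarith

lemma eval_iter_deriv_f (p j : ℕ) (hj : j < p) (x : ℝ) (hx : x ^ 2 - 1 = 0) :
    (derivative^[j] (f p)).eval x = 0 := by
  obtain ⟨g, hg⟩ := pow_sub_dvd_iterate_derivative_pow ((X:Polynomial ℝ) ^ 2 - 1) p j
  rw [f, hg, eval_mul, eval_pow]
  have h1 : ((X:Polynomial ℝ) ^ 2 - 1).eval x = 0 := by simpa using hx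
  rw [h1, zero_pow (by omega), zero_mul]

lemma step (p a b : ℕ) (ha : a < p) :
    (∫ x in (-1:ℝ)..1, (derivative^[a+1] (f p)).eval x * (derivative^[b] (f p)).eval x)
    = - ∫ x in (-1:ℝ)..1, (derivative^[a] (f p)).eval x * (derivative^[b+1] (f p)).eval x := by
  have h := ibp (derivative^[a] (f p)) (derivative^[b] (f p))
  rw [Function.iterate_succ_apply' derivative a, Function.iterate_succ_apply' derivative b, h,
    eval_iter_deriv_f p a ha 1 (by norm_num),
    eval_iter_deriv_f p a ha (-1) (by norm_num)]
  ring

lemma shift (p : ℕ) (hp : 1 ≤ p) : ∀ k, k ≤ p - 1 →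
    (∫ x in (-1:ℝ)..1, (derivative^[p-1] (f p)).eval x * (derivative^[p-1] (f p)).eval x)
    = (-1:ℝ)^k * ∫ x in (-1:ℝ)..1,
        (derivative^[p-1-k] (f p)).eval x * (derivative^[p-1+k] (f p)).eval x := by
  intro k
  induction k with
  | zero => simp
  | succ k ih =>
    intro hk
    have h1 := ih (by omega)
    have e1 : p - 1 - k = (p - 1 - (k+1)) + 1 := by omega
    have e2 : p - 1 + (k + 1) = (p - 1 + k) + 1 := by omega
    have h2 := step p (p - 1 - (k+1)) (p - 1 + k) (by omega)
    rw [h1, e1, h2, e2, pow_succ]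
    ring

lemma natDeg_f (p : ℕ) : (f p).natDegree = 2 * p := by
  rw [f]
  compute_degree! <;> omega

/-- top three coefficients of `f (q+1)` -/
lemma coeff_f_top (q : ℕ) :
    (f (q+1)).coeff (2*q+2) = 1 ∧ (f (q+1)).coeff (2*q+1) = 0 ∧
      (f (q+1)).coeff (2*q) = -(q+1 : ℝ) := by
  induction q with
  | zero =>
    refine ⟨?_, ?_, ?_⟩ <;> norm_num [f, coeff_one, coeff_X_pow]
  | succ q ih =>
    obtain ⟨h2, h1, h0⟩ := ih
    have hf : f (q+2) = X^2 * f (q+1) - f (q+1) := by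
      rw [f, f, pow_succ, mul_comm]; ring
    have hdeg : ∀ n, 2*(q+1) < n → (f (q+1)).coeff n = 0 := by
      intro n hn
      apply coeff_eq_zero_of_natDegree_lt
      rw [natDeg_f]; omega
    refine ⟨?_, ?_, ?_⟩ <;> rw [hf, coeff_sub]
    · rw [show 2*(q+1)+2 = (2*q+2) + 2 from by ring, coeff_X_pow_mul, h2,
        hdeg _ (by omega)]
      norm_num
    · rw [show 2*(q+1)+1 = (2*q+1) + 2 from by ring, coeff_X_pow_mul, h1,
        hdeg _ (by omega)]
      norm_num
    · rw [show 2*(q+1) = (2*q) + 2 from by ring, coeff_X_pow_mul, h0, h2]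
      push_cast; ring

lemma iter_deriv_f (q : ℕ) :
    derivative^[2*q] (f (q+1)) =
      C (((2*q+2).factorial : ℝ) / 2) * X ^ 2 - C ((q+1) * ((2*q).factorial : ℝ)) := by
  obtain ⟨h2, h1, h0⟩ := coeff_f_top q
  ext n
  rw [coeff_iterate_derivative]
  match n with
  | 0 =>
    rw [coeff_sub, coeff_C_mul, coeff_X_pow, coeff_C]
    simp only [zero_add, Nat.descFactorial_self, h0, nsmul_eq_mul]
    norm_num
    ring
  | 1 =>
    rw [coeff_sub, coeff_C_mul, coeff_X_pow, coeff_C]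
    rw [show 1 + 2*q = 2*q+1 from by ring, h1]
    simp
  | 2 =>
    rw [coeff_sub, coeff_C_mul, coeff_X_pow, coeff_C]
    rw [show 2 + 2*q = 2*q+2 from by ring, h2]
    have hd : (2:ℕ).factorial * (2*q+2).descFactorial (2*q) = (2*q+2).factorial := by
      have := Nat.factorial_mul_descFactorial (n := 2*q+2) (k := 2*q) (by omega)
      simpa using this
    have hd' : ((2*q+2).descFactorial (2*q) : ℝ) = ((2*q+2).factorial : ℝ) / 2 := by
      field_simp
      rw [← hd]; push_cast [Nat.factorial]; ring
    simp [nsmul_eq_mul, hd']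
  | (m+3) =>
    have hz : (f (q+1)).coeff (m + 3 + 2*q) = 0 := by
      apply coeff_eq_zero_of_natDegree_lt
      rw [natDeg_f]; omega
    rw [hz, coeff_sub, coeff_C_mul, coeff_X_pow, coeff_C]
    simp only [smul_zero]
    rw [if_neg (by omega), if_neg (by omega)]
    ring

lemma intI : ∀ p : ℕ, (∫ x in (-1:ℝ)..1, (x^2-1)^p)
    = (-1)^p * 4^p * ((p.factorial : ℝ))^2 * 2 / ((2*p+1).factorial : ℝ) := by
  intro p
  induction p with
  | zero => norm_num
  | succ p ih =>
    have hder : ∀ x : ℝ, HasDerivAt (fun x : ℝ => x * (x^2-1)^(p+1))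
        ((x^2-1)^(p+1) + (2*((p:ℝ)+1)) * (x^2 * (x^2-1)^p)) x := by
      intro x
      have h1 : HasDerivAt (fun x : ℝ => x^2 - 1) (2*x) x := by
        simpa using ((hasDerivAt_pow 2 x).sub_const 1)
      have h2 := h1.fun_pow (p+1)
      have h3 := (hasDerivAt_id x).fun_mul h2
      refine h3.congr_deriv ?_
      simp only [id_eq, Nat.add_sub_cancel]
      push_cast
      ring
    have hcont : ∀ (c : ℕ), IntervalIntegrable (fun x : ℝ => (x^2-1)^c) volume (-1) 1 :=
      fun c => (((continuous_pow 2).sub continuous_const).pow c).intervalIntegrable _ _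
    have hcont2 : IntervalIntegrable (fun x : ℝ => x^2 * (x^2-1)^p) volume (-1) 1 :=
      ((continuous_pow 2).mul
        (((continuous_pow 2).sub continuous_const).pow p)).intervalIntegrable _ _
    have hcont3 : IntervalIntegrable (fun x : ℝ => (2*((p:ℝ)+1)) * (x^2 * (x^2-1)^p))
        volume (-1) 1 := hcont2.const_mul _
    have hftc := intervalIntegral.integral_eq_sub_of_hasDerivAt
      (f := fun x : ℝ => x * (x^2-1)^(p+1))
      (f' := fun x : ℝ => (x^2-1)^(p+1) + (2*((p:ℝ)+1)) * (x^2 * (x^2-1)^p))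
      (a := -1) (b := 1) (fun x _ => hder x)
      ((hcont (p+1)).add hcont3)
    rw [intervalIntegral.integral_add (hcont (p+1)) hcont3,
      intervalIntegral.integral_const_mul] at hftc
    have hsq : (∫ x in (-1:ℝ)..1, x^2 * (x^2-1)^p)
        = (∫ x in (-1:ℝ)..1, (x^2-1)^(p+1)) + ∫ x in (-1:ℝ)..1, (x^2-1)^p := by
      rw [← intervalIntegral.integral_add (hcont (p+1)) (hcont p)]
      apply intervalIntegral.integral_congr
      intro x _
      ring
    have hbd : (fun x:ℝ => x * (x^2-1)^(p+1)) 1 - (fun x:ℝ => x * (x^2-1)^(p+1)) (-1) = 0 := by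
      norm_num
    rw [hsq, ih, hbd] at hftc
    set A := ∫ x in (-1:ℝ)..1, (x^2-1)^(p+1) with hA
    set c : ℝ := (-1)^p * 4^p * ((p.factorial : ℝ))^2 * 2 / ((2*p+1).factorial : ℝ) with hc
    have e1 : ((p+1).factorial : ℝ) = ((p:ℝ)+1) * (p.factorial : ℝ) := by
      rw [Nat.factorial_succ]; push_cast; ring
    have e2 : ((2*(p+1)+1).factorial : ℝ)
        = (2*(p:ℝ)+3) * (2*(p:ℝ)+2) * ((2*p+1).factorial : ℝ) := by
      rw [show 2*(p+1)+1 = ((2*p+1) + 1) + 1 from by ring, Nat.factorial_succ, Nat.factorial_succ]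
      push_cast; ring
    have hK : (0:ℝ) < ((2*p+1).factorial : ℝ) := by positivity
    have hAval : A = -(2*((p:ℝ)+1)) * c / (2*(p:ℝ)+3) := by
      have h' : A * (2*(p:ℝ)+3) = -(2*((p:ℝ)+1)) * c := by linarith
      field_simp
      linarith [h']
    rw [hAval, hc, e2, e1]
    field_simp
    ring

/-- `∫ x²(x²-1)^m = I_{m+1} + I_m` -/
lemma intJ (m : ℕ) : (∫ x in (-1:ℝ)..1, x^2 * (x^2-1)^m)
    = (∫ x in (-1:ℝ)..1, (x^2-1)^(m+1)) + ∫ x in (-1:ℝ)..1, (x^2-1)^m := by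
  have hcont : ∀ (c : ℕ), IntervalIntegrable (fun x : ℝ => (x^2-1)^c) volume (-1) 1 :=
    fun c => (((continuous_pow 2).sub continuous_const).pow c).intervalIntegrable _ _
  rw [← intervalIntegral.integral_add (hcont (m+1)) (hcont m)]
  apply intervalIntegral.integral_congr
  intro x _
  ring

lemma hss (q : ℕ) : ((-1:ℝ))^q * (-1)^q = 1 := by
  rw [← pow_add, ← two_mul, pow_mul]
  norm_num

lemma Lhat_eq (q : ℕ) (x : ℝ) :
    Lhat (q+1) x = (1 / (2 ^ (q+1) * ((q+1).factorial : ℝ))) *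
      (derivative^[q] (f (q+1))).eval x := by
  have hleg : ∀ t : ℝ, (legendre (q+1)).eval t
      = (1 / (2 ^ (q+1) * ((q+1).factorial : ℝ)))
        * (derivative (derivative^[q] (f (q+1)))).eval t := by
    intro t
    rw [legendre, eval_mul, eval_C, ← Function.iterate_succ_apply' derivative q]
    rfl
  rw [Lhat]
  simp only [hleg]
  rw [intervalIntegral.integral_const_mul, integral_derivative,
    eval_iter_deriv_f (q+1) q (by omega) (-1) (by norm_num)]
  ring

end LhatAux

set_option maxHeartbeats 1000000 in
open LhatAux Polynomial in
/-- for `p ≥ 1`,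
`∫_{−1}^1 L̂_p(x)² dx = (2/(2p+3) + 2/(2p−1))/(2p+1)²` and consequently
`p(p−1)² ∫_{−1}^1 L̂_p(x)² dx ≤ 1/2`. -/
theorem Lhat_L2_norm (p : ℕ) (hp : 1 ≤ p) :
    (∫ x in (-1 : ℝ)..1, (Lhat p x) ^ 2) =
      (2 / (2 * (p : ℝ) + 3) + 2 / (2 * (p : ℝ) - 1)) / (2 * (p : ℝ) + 1) ^ 2 ∧
    (p : ℝ) * ((p : ℝ) - 1) ^ 2 * (∫ x in (-1 : ℝ)..1, (Lhat p x) ^ 2) ≤ 1 / 2 := by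
  obtain ⟨q, rfl⟩ : ∃ q, p = q + 1 := ⟨p - 1, by omega⟩
  set c : ℝ := 1 / (2 ^ (q+1) * ((q+1).factorial : ℝ)) with hc
  -- Step 1: rewrite via the polynomial antiderivative
  have e0 : (∫ x in (-1:ℝ)..1, (Lhat (q+1) x)^2)
      = c^2 * ∫ x in (-1:ℝ)..1,
          (derivative^[q] (f (q+1))).eval x * (derivative^[q] (f (q+1))).eval x := by
    rw [← intervalIntegral.integral_const_mul]
    apply intervalIntegral.integral_congr
    intro x _
    simp only [Lhat_eq]
    ring
  -- Step 2: integrate by parts q times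
  have hsh := shift (q+1) (by omega) q (by omega)
  simp only [Nat.add_sub_cancel, Nat.sub_self, Function.iterate_zero, id_eq, ← two_mul] at hsh
  rw [iter_deriv_f] at hsh
  -- Step 3: expand the remaining integral
  have hcont : ∀ (m : ℕ), IntervalIntegrable (fun x : ℝ => (x^2-1)^m) volume (-1) 1 :=
    fun m => (((continuous_pow 2).sub continuous_const).pow m).intervalIntegrable _ _
  have hcont2 : IntervalIntegrable (fun x : ℝ => x^2 * (x^2-1)^(q+1)) volume (-1) 1 :=
    ((continuous_pow 2).mul
      (((continuous_pow 2).sub continuous_const).pow (q+1))).intervalIntegrable _ _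
  have e1 : (∫ x in (-1:ℝ)..1, (f (q+1)).eval x *
        (C (((2*q+2).factorial : ℝ) / 2) * X ^ 2 - C ((q+1) * ((2*q).factorial : ℝ))).eval x)
      = (((2*q+2).factorial : ℝ)/2) * (∫ x in (-1:ℝ)..1, x^2 * (x^2-1)^(q+1))
        - (((q+1 : ℕ) : ℝ) * ((2*q).factorial : ℝ)) * ∫ x in (-1:ℝ)..1, (x^2-1)^(q+1) := by
    rw [← intervalIntegral.integral_const_mul, ← intervalIntegral.integral_const_mul,
      ← intervalIntegral.integral_sub (hcont2.const_mul _) ((hcont (q+1)).const_mul _)]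
    apply intervalIntegral.integral_congr
    intro x _
    simp only [f, eval_pow, eval_sub, eval_mul, eval_C, eval_X, eval_one, eval_pow]
    push_cast
    ring
  rw [e1, intJ (q+1)] at hsh
  -- Step 4: signed closed forms
  have W1 : ((-1:ℝ))^q * (∫ x in (-1:ℝ)..1, (x^2-1)^(q+1))
      = -(4^(q+1) * (((q+1).factorial : ℝ))^2 * 2 / (((2*(q+1)+1).factorial : ℝ))) := by
    rw [intI (q+1), pow_succ]
    linear_combination
      (-(4^(q+1) * (((q+1).factorial : ℝ))^2 * 2 / (((2*(q+1)+1).factorial : ℝ)))) * hss q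
  have W2 : ((-1:ℝ))^q * (∫ x in (-1:ℝ)..1, (x^2-1)^(q+1+1))
      = 4^(q+1+1) * (((q+1+1).factorial : ℝ))^2 * 2 / (((2*(q+1+1)+1).factorial : ℝ)) := by
    rw [intI (q+1+1), pow_succ, pow_succ]
    linear_combination
      (4^(q+1+1) * (((q+1+1).factorial : ℝ))^2 * 2 / (((2*(q+1+1)+1).factorial : ℝ))) * hss q
  have hsplit : ((-1:ℝ))^q * ((((2*q+2).factorial : ℝ)/2) *
        ((∫ x in (-1:ℝ)..1, (x^2-1)^(q+1+1)) + ∫ x in (-1:ℝ)..1, (x^2-1)^(q+1))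
        - (((q+1 : ℕ) : ℝ) * ((2*q).factorial : ℝ)) * ∫ x in (-1:ℝ)..1, (x^2-1)^(q+1))
      = (((2*q+2).factorial : ℝ)/2) * (((-1:ℝ))^q * ∫ x in (-1:ℝ)..1, (x^2-1)^(q+1+1))
        + ((((2*q+2).factorial : ℝ)/2) - (((q+1 : ℕ) : ℝ) * ((2*q).factorial : ℝ)))
          * (((-1:ℝ))^q * ∫ x in (-1:ℝ)..1, (x^2-1)^(q+1)) := by
    ring
  rw [hsplit, W1, W2] at hsh
  -- Step 5: final arithmetic
  set G : ℝ := ((2*q).factorial : ℝ) with hG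
  set Q : ℝ := (q.factorial : ℝ) with hQ
  have hGpos : (0:ℝ) < G := by rw [hG]; positivity
  have hQpos : (0:ℝ) < Q := by rw [hQ]; positivity
  have f1 : ((2*q+2).factorial : ℝ) = (2*(q:ℝ)+2) * (2*(q:ℝ)+1) * G := by
    rw [show 2*q+2 = ((2*q) + 1) + 1 from by ring, Nat.factorial_succ, Nat.factorial_succ, hG]
    push_cast; ring
  have f3 : ((2*(q+1)+1).factorial : ℝ) = (2*(q:ℝ)+3) * (2*(q:ℝ)+2) * (2*(q:ℝ)+1) * G := by
    rw [show 2*(q+1)+1 = (((2*q) + 1) + 1) + 1 from by ring, Nat.factorial_succ,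
      Nat.factorial_succ, Nat.factorial_succ, hG]
    push_cast; ring
  have f5 : ((2*(q+1+1)+1).factorial : ℝ)
      = (2*(q:ℝ)+5) * (2*(q:ℝ)+4) * (2*(q:ℝ)+3) * (2*(q:ℝ)+2) * (2*(q:ℝ)+1) * G := by
    rw [show 2*(q+1+1)+1 = (((((2*q) + 1) + 1) + 1) + 1) + 1 from by ring, Nat.factorial_succ,
      Nat.factorial_succ, Nat.factorial_succ, Nat.factorial_succ, Nat.factorial_succ, hG]
    push_cast; ring
  have g1 : (((q+1).factorial : ℝ)) = ((q:ℝ)+1) * Q := by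
    rw [Nat.factorial_succ, hQ]; push_cast; ring
  have g2 : (((q+1+1).factorial : ℝ)) = ((q:ℝ)+2) * ((q:ℝ)+1) * Q := by
    rw [Nat.factorial_succ, Nat.factorial_succ, hQ]; push_cast; ring
  have p4a : (4:ℝ)^(q+1) = ((2:ℝ)^(q+1))^2 := by
    rw [show (4:ℝ) = 2^2 from by norm_num, ← pow_mul, ← pow_mul, mul_comm]
  have p4b : (4:ℝ)^(q+1+1) = 4 * ((2:ℝ)^(q+1))^2 := by
    rw [pow_succ, p4a]; ring
  have hT : (0:ℝ) < (2:ℝ)^(q+1) := by positivity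
  have main : (∫ x in (-1:ℝ)..1, (Lhat (q+1) x)^2)
      = (2 / (2 * ((q+1 : ℕ) : ℝ) + 3) + 2 / (2 * ((q+1 : ℕ) : ℝ) - 1))
        / (2 * ((q+1 : ℕ) : ℝ) + 1) ^ 2 := by
    rw [e0, hsh, hc, g1, g2, f1, f3, f5, p4a, p4b]
    push_cast
    rw [show 2*((q:ℝ)+1)-1 = 2*(q:ℝ)+1 from by ring,
      show 2*((q:ℝ)+1)+3 = 2*(q:ℝ)+5 from by ring,
      show 2*((q:ℝ)+1)+1 = 2*(q:ℝ)+3 from by ring]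
    have h1 : (0:ℝ) < 2*(q:ℝ)+1 := by positivity
    have h2 : (0:ℝ) < 2*(q:ℝ)+2 := by positivity
    have h3 : (0:ℝ) < 2*(q:ℝ)+3 := by positivity
    have h4 : (0:ℝ) < 2*(q:ℝ)+4 := by positivity
    have h5 : (0:ℝ) < 2*(q:ℝ)+5 := by positivity
    have hq1 : (0:ℝ) < (q:ℝ)+1 := by positivity
    field_simp [h1.ne', h2.ne', h3.ne', h4.ne', h5.ne', hq1.ne', hGpos.ne', hQpos.ne', hT.ne']
    ring
  refine ⟨main, ?_⟩
  rw [main]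
  have hq1 : (0:ℝ) ≤ (q:ℝ) := Nat.cast_nonneg q
  push_cast
  have h1 : (0:ℝ) < 2*(q:ℝ)+1 := by positivity
  have h3 : (0:ℝ) < 2*(q:ℝ)+3 := by positivity
  have h5 : (0:ℝ) < 2*(q:ℝ)+5 := by positivity
  have key : (2 / (2 * ((q:ℝ)+1) + 3) + 2 / (2 * ((q:ℝ)+1) - 1)) / (2 * ((q:ℝ)+1) + 1) ^ 2
      = 4 / ((2*(q:ℝ)+5) * (2*(q:ℝ)+1) * (2*(q:ℝ)+3)) := by
    have e : 2 * ((q:ℝ)+1) - 1 = 2*(q:ℝ)+1 := by ring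
    rw [e, show 2 * ((q:ℝ)+1) + 3 = 2*(q:ℝ)+5 from by ring,
      show 2 * ((q:ℝ)+1) + 1 = 2*(q:ℝ)+3 from by ring]
    field_simp
    ring
  rw [key]
  rw [show ((q:ℝ)+1) * ((q:ℝ)+1-1)^2 * (4 / ((2*(q:ℝ)+5) * (2*(q:ℝ)+1) * (2*(q:ℝ)+3)))
      = (4*((q:ℝ)+1)*(q:ℝ)^2) / ((2*(q:ℝ)+5) * (2*(q:ℝ)+1) * (2*(q:ℝ)+3)) from by ring,
    div_le_iff₀ (by positivity)]
  nlinarith [sq_nonneg (q:ℝ), hq1]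

end
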